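/- Let s ≥ 1 and n ≥ 0 be integers and let 0 ≤ ρ ≤ 1/√(2s−1). In the polynomial ring ℝ[{F_x : x ∈ {−1,1}ⁿ}], the polynomial (2^{−n} Σ_{x∈{−1,1}ⁿ} F_x²)^s − 2^{−n} Σ_{x∈{−1,1}ⁿ} (T_ρF(x))^{2s} is a sum of squares of polynomials, where T_ρF(x) denotes the linear form 2^{−n} Σ_{y∈{−1,1}ⁿ} (∏_{i=1}^{n} (1 + ρ xᵢ yᵢ)) F_y. -/

import Mathlib

open MvPolynomial

/-- The point of the cube `{−1,1}` encoded by a Boolean. -/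
def sgn (b : Bool) : ℝ := if b then 1 else -1

/-!
Induction on `n`, carried out for vector-valued `F : {−1,1}ⁿ → Aᶥ` with `|v|² = v ⬝ᵥ v`. Writing
`F(b, x) = G x + b H x` in the first coordinate gives `T_ρ F(b, x) = T_ρ G x + ρ b T_ρ H x` and
`𝔼 |F|² = 𝔼 (|G|² + |H|²)`, so the induction hypothesis for the pair `(G, H)` leaves the two-point
inequality `(|G|² + |H|²)ˢ ≥ ½ (|G + ρH|^{2s} + |G − ρH|^{2s})` (for `T_ρ G`, `T_ρ H`) to be written
as a sum of squares. With `u = |G|² + ρ²|H|²` the left side expands as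
`∑ₖ (s choose k) (1 − ρ²)ᵏ u^{s−k} |H|^{2k}` and the right side as
`∑ₖ (s choose 2k) (2ρ)^{2k} u^{s−2k} ⟨G, H⟩^{2k}`. Termwise, the coefficients compare because
`2ᵏ (s choose 2k) ≤ (s choose k) (s − 1)ᵏ` and `ρ² (2s − 1) ≤ 1`, and `u |H|² − ⟨G, H⟩²` is a sum
of squares by Lagrange's identity.
-/

open Finset

@[simp] theorem sgn_true : sgn true = 1 := rfl

@[simp] theorem sgn_false : sgn false = -1 := rfl

theorem IsSumSq.pow {R : Type*} [CommSemiring R] {p : R} (hp : IsSumSq p) (k : ℕ) :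
    IsSumSq (p ^ k) := by
  simpa using pow_mem (Subsemiring.mem_sumSq.mpr hp) k

theorem IsSumSq.exists_fin_sum_sq {R : Type*} [CommSemiring R] {p : R} (hp : IsSumSq p) :
    ∃ (m : ℕ) (q : Fin m → R), p = ∑ j, q j ^ 2 := by
  induction hp with
  | zero => exact ⟨0, ![], by simp⟩
  | sq_add a _ ih =>
    obtain ⟨m, q, rfl⟩ := ih
    exact ⟨m + 1, Fin.cons a q, by simp [Fin.sum_univ_succ, sq]⟩

theorem IsSumSq.pow_sub_pow {R : Type*} [CommRing R] {x y : R} (hxy : IsSumSq (x - y))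
    (hy : IsSumSq y) (k : ℕ) : IsSumSq (x ^ k - y ^ k) := by
  have hx : IsSumSq x := by simpa using hxy.add hy
  induction k with
  | zero => simp
  | succ k ih =>
    rw [show x ^ (k + 1) - y ^ (k + 1) = (x - y) * x ^ k + y * (x ^ k - y ^ k) by ring]
    exact (hxy.mul (hx.pow k)).add (hy.mul ih)

theorem dotProduct_lagrange_identity {R ι : Type*} [CommRing R] [Fintype ι] (a b : ι → R) :
    2 * (a ⬝ᵥ a * (b ⬝ᵥ b) - (a ⬝ᵥ b) ^ 2) = ∑ i, ∑ j, (a i * b j - a j * b i) ^ 2 := by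
  have expand : ∀ i j, (a i * b j - a j * b i) ^ 2
      = a i * a i * (b j * b j) + a j * a j * (b i * b i) - 2 * (a i * b i * (a j * b j)) := by
    intro i j; ring
  simp only [expand, sum_add_distrib, sum_sub_distrib, ← mul_sum, ← sum_mul, dotProduct]
  ring

theorem sum_range_eq_sum_range_two_mul {M : Type*} [AddCommMonoid M] {t : ℕ → M} {n : ℕ}
    (hodd : ∀ j, Odd j → t j = 0) (hbig : ∀ j, n < j → t j = 0) :
    ∑ j ∈ range (n + 1), t j = ∑ k ∈ range (n + 1), t (2 * k) := by
  have himage : ∑ k ∈ range (n + 1), t (2 * k) = ∑ j ∈ (range (n + 1)).image (2 * ·), t j :=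
    (sum_image fun _ _ _ _ h => by simpa using h).symm
  rw [himage, sum_subset (s₂ := range (2 * n + 1)) (by intro j; simp; omega)
      fun j _ hj => hbig j (by simpa using hj)]
  refine (sum_subset (by intro j; simp; omega) fun j hj hj' => hodd j ?_).symm
  refine Nat.not_even_iff_odd.mp fun ⟨k, hk⟩ => hj' ?_
  simp only [mem_image, mem_range] at hj ⊢
  exact ⟨k, by omega, by omega⟩

theorem add_pow_add_sub_pow {R : Type*} [CommRing R] (x y : R) (n : ℕ) :
    (x + y) ^ n + (x - y) ^ n
      = 2 * ∑ k ∈ range (n + 1), y ^ (2 * k) * x ^ (n - 2 * k) * n.choose (2 * k) := by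
  rw [add_comm x, sub_eq_neg_add, add_pow, add_pow, ← sum_add_distrib,
    sum_range_eq_sum_range_two_mul, mul_sum]
  · refine sum_congr rfl fun k _ => ?_
    rw [(even_two_mul k).neg_pow]
    ring
  · intro j hj
    rw [hj.neg_pow]
    ring
  · intro j hj
    simp [Nat.choose_eq_zero_of_lt hj]

theorem Nat.two_pow_le_centralBinom (k : ℕ) : 2 ^ k ≤ k.centralBinom := by
  induction k with
  | zero => simp
  | succ k ih =>
    have := Nat.succ_mul_centralBinom_succ k
    rw [pow_succ]
    nlinarith

theorem Nat.two_pow_mul_choose_two_mul_le (s k : ℕ) :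
    2 ^ k * s.choose (2 * k) ≤ s.choose k * (s - 1) ^ k := by
  have hmul : s.choose (2 * k) * k.centralBinom = s.choose k * (s - k).choose k := by
    rw [Nat.centralBinom_eq_two_mul_choose, Nat.choose_mul (by omega),
      show 2 * k - k = k by omega]
  have hsmall : (s - k).choose k ≤ (s - 1) ^ k := by
    rcases k.eq_zero_or_pos with rfl | hk
    · simp
    · exact (Nat.choose_le_pow _ _).trans (Nat.pow_le_pow_left (by omega) _)
  refine Nat.le_of_mul_le_mul_right ?_ k.centralBinom_pos
  calc 2 ^ k * s.choose (2 * k) * k.centralBinom = 2 ^ k * (s.choose k * (s - k).choose k) := by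
        rw [mul_assoc, hmul]
    _ ≤ k.centralBinom * (s.choose k * (s - 1) ^ k) := by
        gcongr
        exact Nat.two_pow_le_centralBinom k
    _ = s.choose k * (s - 1) ^ k * k.centralBinom := by ring

theorem choose_two_mul_mul_pow_le {s : ℕ} (hs : 1 ≤ s) {ρ : ℝ} (hρ : ρ ^ 2 * (2 * s - 1) ≤ 1)
    (k : ℕ) : s.choose (2 * k) * (2 * ρ) ^ (2 * k) ≤ s.choose k * (1 - ρ ^ 2) ^ k := by
  have hchoose : (2 : ℝ) ^ k * s.choose (2 * k) ≤ s.choose k * ((s : ℝ) - 1) ^ k := by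
    exact_mod_cast Nat.two_pow_mul_choose_two_mul_le s k
  have hs' : (1 : ℝ) ≤ s := by exact_mod_cast hs
  calc (s.choose (2 * k) : ℝ) * (2 * ρ) ^ (2 * k)
        = 2 ^ k * s.choose (2 * k) * (2 * ρ ^ 2) ^ k := by
          rw [pow_mul, show (2 * ρ) ^ 2 = 2 * (2 * ρ ^ 2) by ring, mul_pow]; ring
    _ ≤ s.choose k * ((s : ℝ) - 1) ^ k * (2 * ρ ^ 2) ^ k := by gcongr
    _ = s.choose k * (((s : ℝ) - 1) * (2 * ρ ^ 2)) ^ k := by rw [mul_pow ((s : ℝ) - 1)]; ring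
    _ ≤ s.choose k * (1 - ρ ^ 2) ^ k := by
        gcongr
        linarith

section RealAlgebra

variable {A : Type*} [CommRing A] [Algebra ℝ A]

theorem IsSumSq.smul {c : ℝ} (hc : 0 ≤ c) {p : A} (hp : IsSumSq p) : IsSumSq (c • p) := by
  rw [Algebra.smul_def, ← Real.mul_self_sqrt hc, map_mul]
  exact (IsSumSq.mul_self _).mul hp

theorem IsSumSq.smul_sub_smul {a b : ℝ} (hb : 0 ≤ b) (hba : b ≤ a) {p q : A}
    (hq : IsSumSq q) (hpq : IsSumSq (p - q)) : IsSumSq (a • p - b • q) := by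
  have hp : IsSumSq p := by simpa using hpq.add hq
  rw [show a • p - b • q = (a - b) • p + b • (p - q) by module]
  exact (hp.smul (sub_nonneg.mpr hba)).add (hpq.smul hb)

theorem inv_two_smul_two_mul (x : A) : (2 : ℝ)⁻¹ • (2 * x) = x := by
  rw [two_mul, ← two_smul ℝ x, inv_smul_smul₀ two_ne_zero]

theorem isSumSq_dotProduct_self_mul_sub_sq {ι : Type*} [Fintype ι] (a b : ι → A) :
    IsSumSq (a ⬝ᵥ a * (b ⬝ᵥ b) - (a ⬝ᵥ b) ^ 2) := by
  rw [← inv_two_smul_two_mul (_ - _), dotProduct_lagrange_identity]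
  exact IsSumSq.smul (by norm_num) (IsSumSq.sum fun i _ => IsSumSq.sum_sq _ _)

theorem isSumSq_two_point {s : ℕ} (hs : 1 ≤ s) {ρ : ℝ}
    (hρ : ρ ^ 2 * (2 * s - 1) ≤ 1) {Q S R : A} (hQ : IsSumSq Q) (hS : IsSumSq S)
    (hQSR : IsSumSq (Q * S - R ^ 2)) :
    IsSumSq ((Q + S) ^ s - (2 : ℝ)⁻¹ •
      ((Q + ρ ^ 2 • S + (2 * ρ) • R) ^ s + (Q + ρ ^ 2 • S - (2 * ρ) • R) ^ s)) := by
  set u := Q + ρ ^ 2 • S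
  have hu : IsSumSq u := hQ.add (hS.smul (sq_nonneg ρ))
  have huSR : IsSumSq (u * S - R ^ 2) := by
    rw [show u * S - R ^ 2 = (Q * S - R ^ 2) + ρ ^ 2 • S ^ 2 by
      simp only [u, add_mul, smul_mul_assoc, sq]; ring]
    exact hQSR.add ((hS.pow 2).smul (sq_nonneg ρ))
  have hR : IsSumSq (R ^ 2) := (IsSquare.sq R).isSumSq
  have hupper : (Q + S) ^ s
      = ∑ k ∈ range (s + 1), ((s.choose k : ℝ) * (1 - ρ ^ 2) ^ k) • (u ^ (s - k) * S ^ k) := by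
    rw [show Q + S = (1 - ρ ^ 2) • S + u by module, add_pow]
    refine sum_congr rfl fun k _ => ?_
    simp only [Algebra.smul_def, map_mul, map_natCast, map_pow, mul_pow]
    ring
  have hlower : (2 : ℝ)⁻¹ • ((u + (2 * ρ) • R) ^ s + (u - (2 * ρ) • R) ^ s)
      = ∑ k ∈ range (s + 1),
          ((s.choose (2 * k) : ℝ) * (2 * ρ) ^ (2 * k)) • (u ^ (s - 2 * k) * R ^ (2 * k)) := by
    rw [add_pow_add_sub_pow, inv_two_smul_two_mul]
    refine sum_congr rfl fun k _ => ?_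
    simp only [Algebra.smul_def, map_mul, map_natCast, map_pow, mul_pow]
    ring
  rw [hupper, hlower, ← sum_sub_distrib]
  refine IsSumSq.sum fun k _ => ?_
  have hcoeff := choose_two_mul_mul_pow_le hs hρ k
  rcases le_or_gt (2 * k) s with hk | hk
  · have hsplit : u ^ (s - k) * S ^ k - u ^ (s - 2 * k) * R ^ (2 * k)
        = u ^ (s - 2 * k) * ((u * S) ^ k - (R ^ 2) ^ k) := by
      rw [show s - k = s - 2 * k + k by omega, pow_add, mul_pow, ← pow_mul]
      ring
    refine IsSumSq.smul_sub_smul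
      (mul_nonneg (Nat.cast_nonneg _) ((even_two_mul k).pow_nonneg _)) hcoeff
      ((hu.pow _).mul (by rw [pow_mul]; exact hR.pow k)) ?_
    rw [hsplit]
    exact (hu.pow _).mul (huSR.pow_sub_pow hR k)
  · rw [Nat.choose_eq_zero_of_lt hk, Nat.cast_zero, zero_mul] at hcoeff ⊢
    rw [zero_smul, sub_zero]
    exact ((hu.pow _).mul (hS.pow _)).smul hcoeff

theorem isSumSq_two_point_dotProduct {s : ℕ} (hs : 1 ≤ s) {ρ : ℝ}
    (hρ : ρ ^ 2 * (2 * s - 1) ≤ 1) {ι : Type*} [Fintype ι] (G H : ι → A) :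
    IsSumSq ((G ⬝ᵥ G + H ⬝ᵥ H) ^ s - (2 : ℝ)⁻¹ •
      (((G + ρ • H) ⬝ᵥ (G + ρ • H)) ^ s + ((G - ρ • H) ⬝ᵥ (G - ρ • H)) ^ s)) := by
  have hplus : (G + ρ • H) ⬝ᵥ (G + ρ • H) = G ⬝ᵥ G + ρ ^ 2 • (H ⬝ᵥ H) + (2 * ρ) • (G ⬝ᵥ H) := by
    simp only [add_dotProduct, dotProduct_add, smul_dotProduct, dotProduct_smul,
      dotProduct_comm H G]
    module
  have hminus : (G - ρ • H) ⬝ᵥ (G - ρ • H) = G ⬝ᵥ G + ρ ^ 2 • (H ⬝ᵥ H) - (2 * ρ) • (G ⬝ᵥ H) := by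
    simp only [sub_dotProduct, dotProduct_sub, smul_dotProduct, dotProduct_smul,
      dotProduct_comm H G]
    module
  rw [hplus, hminus]
  exact isSumSq_two_point hs hρ (IsSumSq.sum_mul_self _ _)
    (IsSumSq.sum_mul_self _ _) (isSumSq_dotProduct_self_mul_sub_sq G H)

end RealAlgebra

noncomputable section Cube

variable {M : Type*} [AddCommGroup M] [Module ℝ M]

def cubeAvg {n : ℕ} (φ : (Fin n → Bool) → M) : M := ((2 : ℝ) ^ n)⁻¹ • ∑ x, φ x

/-- `noise ρ f` is the paper's `T_ρ f`. -/
def noise (ρ : ℝ) {n : ℕ} (f : (Fin n → Bool) → M) (x : Fin n → Bool) : M :=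
  cubeAvg fun y => (∏ i, (1 + ρ * sgn (x i) * sgn (y i))) • f y

theorem cubeAvg_add {n : ℕ} (φ ψ : (Fin n → Bool) → M) :
    cubeAvg (fun x => φ x + ψ x) = cubeAvg φ + cubeAvg ψ := by
  simp only [cubeAvg, sum_add_distrib, smul_add]

theorem cubeAvg_sub {n : ℕ} (φ ψ : (Fin n → Bool) → M) :
    cubeAvg (fun x => φ x - ψ x) = cubeAvg φ - cubeAvg ψ := by
  simp only [cubeAvg, sum_sub_distrib, smul_sub]

theorem cubeAvg_smul {n : ℕ} (c : ℝ) (φ : (Fin n → Bool) → M) :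
    cubeAvg (fun x => c • φ x) = c • cubeAvg φ := by
  simp only [cubeAvg, ← smul_sum, smul_comm c]

theorem cubeAvg_fin_zero (φ : (Fin 0 → Bool) → M) (x : Fin 0 → Bool) : cubeAvg φ = φ x := by
  rw [cubeAvg, Fintype.sum_unique, pow_zero, inv_one, one_smul]
  exact congrArg φ (Subsingleton.elim _ _)

theorem cubeAvg_succ {n : ℕ} (φ : (Fin (n + 1) → Bool) → M) :
    cubeAvg φ = cubeAvg fun x => (2 : ℝ)⁻¹ • (φ (Fin.cons true x) + φ (Fin.cons false x)) := by
  rw [cubeAvg, cubeAvg, ← smul_sum, smul_smul, ← mul_inv, ← pow_succ,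
    ← (Fin.consEquiv fun _ => Bool).sum_comp, Fintype.sum_prod_type, Fintype.sum_bool,
    ← sum_add_distrib]
  rfl

theorem noise_fin_zero (ρ : ℝ) (f : (Fin 0 → Bool) → M) (x : Fin 0 → Bool) :
    noise ρ f x = f x := by
  rw [noise, cubeAvg_fin_zero _ x, univ_eq_empty, prod_empty, one_smul]

theorem noise_apply {ι : Type*} (ρ : ℝ) {n : ℕ} (f : (Fin n → Bool) → ι → M)
    (x : Fin n → Bool) (c : ι) : noise ρ f x c = noise ρ (fun y => f y c) x := by
  simp [noise, cubeAvg, Finset.sum_apply]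

theorem noise_cons (ρ : ℝ) {n : ℕ} {f : (Fin (n + 1) → Bool) → M} {g h : (Fin n → Bool) → M}
    (hf : ∀ b y, f (Fin.cons b y) = g y + sgn b • h y) (b : Bool) (x : Fin n → Bool) :
    noise ρ f (Fin.cons b x) = noise ρ g x + (ρ * sgn b) • noise ρ h x := by
  rw [noise, cubeAvg_succ, noise, noise, ← cubeAvg_smul, ← cubeAvg_add]
  congr 1
  funext y
  simp only [Fin.prod_univ_succ, Fin.cons_zero, Fin.cons_succ, hf, sgn_true, sgn_false]
  module

theorem noise_sumElim {ι κ : Type*} (ρ : ℝ) {n : ℕ} (g : (Fin n → Bool) → ι → M)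
    (h : (Fin n → Bool) → κ → M) (x : Fin n → Bool) :
    noise ρ (fun y => Sum.elim (g y) (h y)) x = Sum.elim (noise ρ g x) (noise ρ h x) := by
  funext c
  cases c <;> simp [noise_apply]

theorem cubeAvg_comp_noise_succ {N : Type*} [AddCommGroup N] [Module ℝ N] (Φ : M → N) (ρ : ℝ)
    {n : ℕ} {f : (Fin (n + 1) → Bool) → M} {g h : (Fin n → Bool) → M}
    (hf : ∀ b y, f (Fin.cons b y) = g y + sgn b • h y) :
    cubeAvg (fun x => Φ (noise ρ f x)) = cubeAvg fun x =>
      (2 : ℝ)⁻¹ • (Φ (noise ρ g x + ρ • noise ρ h x) + Φ (noise ρ g x - ρ • noise ρ h x)) := by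
  simp only [cubeAvg_succ (fun x => Φ (noise ρ f x)), noise_cons ρ hf, sgn_true, sgn_false,
    mul_one, mul_neg, neg_smul, sub_eq_add_neg]

end Cube

section CubeSumsOfSquares

variable {A : Type*} [CommRing A] [Algebra ℝ A]

theorem IsSumSq.cubeAvg {n : ℕ} {φ : (Fin n → Bool) → A} (hφ : ∀ x, IsSumSq (φ x)) :
    IsSumSq (cubeAvg φ) :=
  (IsSumSq.sum fun x _ => hφ x).smul (by positivity)

theorem cubeAvg_dotProduct_self_succ {ι : Type*} [Fintype ι] {n : ℕ}
    {f : (Fin (n + 1) → Bool) → ι → A} {g h : (Fin n → Bool) → ι → A}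
    (hf : ∀ b y, f (Fin.cons b y) = g y + sgn b • h y) :
    cubeAvg (fun x => f x ⬝ᵥ f x) = cubeAvg fun x => g x ⬝ᵥ g x + h x ⬝ᵥ h x := by
  rw [cubeAvg_succ]
  congr 1
  funext x
  simp only [hf, sgn_true, sgn_false, one_smul, neg_smul, ← sub_eq_add_neg, add_dotProduct,
    dotProduct_add, sub_dotProduct, dotProduct_sub, dotProduct_comm (h x) (g x)]
  module

theorem isSumSq_cubeAvg_pow_sub_cubeAvg_noise_pow {s : ℕ} (hs : 1 ≤ s) {ρ : ℝ}
    (hρ : ρ ^ 2 * (2 * s - 1) ≤ 1) (n : ℕ) {ι : Type*} [Fintype ι]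
    (f : (Fin n → Bool) → ι → A) :
    IsSumSq ((cubeAvg fun x => f x ⬝ᵥ f x) ^ s
      - cubeAvg fun x => (noise ρ f x ⬝ᵥ noise ρ f x) ^ s) := by
  induction n generalizing ι with
  | zero =>
    simp only [noise_fin_zero]
    rw [cubeAvg_fin_zero _ default, cubeAvg_fin_zero _ default, sub_self]
    exact IsSumSq.zero
  | succ n ih =>
    set g : (Fin n → Bool) → ι → A :=
      fun y => (2 : ℝ)⁻¹ • (f (Fin.cons true y) + f (Fin.cons false y))
    set h : (Fin n → Bool) → ι → A :=
      fun y => (2 : ℝ)⁻¹ • (f (Fin.cons true y) - f (Fin.cons false y))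
    have hf : ∀ b y, f (Fin.cons b y) = g y + sgn b • h y := by
      intro b y
      cases b <;> simp only [g, h, sgn_true, sgn_false] <;> module
    have hpair := ih fun y => Sum.elim (g y) (h y)
    simp only [noise_sumElim, sumElim_dotProduct_sumElim] at hpair
    rw [cubeAvg_dotProduct_self_succ hf, cubeAvg_comp_noise_succ (fun v => (v ⬝ᵥ v) ^ s) ρ hf,
      ← sub_add_sub_cancel _
        (cubeAvg fun x => (noise ρ g x ⬝ᵥ noise ρ g x + noise ρ h x ⬝ᵥ noise ρ h x) ^ s),
      ← cubeAvg_sub]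
    exact hpair.add (IsSumSq.cubeAvg fun x => isSumSq_two_point_dotProduct hs hρ _ _)

end CubeSumsOfSquares

theorem stmt_3 (s n : ℕ) (hs : 1 ≤ s) (ρ : ℝ)
    (hρ0 : 0 ≤ ρ) (hρ1 : ρ ≤ 1 / Real.sqrt (2*(s:ℝ) - 1)) :
    ∃ (m : ℕ) (q : Fin m → MvPolynomial (Fin n → Bool) ℝ),
      (C (((2:ℝ)^n)⁻¹) * ∑ x : Fin n → Bool, (X x)^2)^s
        - C (((2:ℝ)^n)⁻¹) *
            ∑ x : Fin n → Bool,
              (C (((2:ℝ)^n)⁻¹) *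
                ∑ y : Fin n → Bool,
                  C (∏ i, (1 + ρ * sgn (x i) * sgn (y i))) * X y)^(2*s)
      = ∑ j, (q j)^2 := by
  have ht : (0 : ℝ) < 2 * s - 1 := by
    have : (1 : ℝ) ≤ s := by exact_mod_cast hs
    linarith
  have hρ : ρ ^ 2 * (2 * s - 1) ≤ 1 := by
    have hρsqrt : ρ * √(2 * s - 1) ≤ 1 := (le_div_iff₀ (Real.sqrt_pos.mpr ht)).mp hρ1
    calc ρ ^ 2 * (2 * s - 1) = (ρ * √(2 * s - 1)) ^ 2 := by rw [mul_pow, Real.sq_sqrt ht.le]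
      _ ≤ 1 := pow_le_one₀ (by positivity) hρsqrt
  obtain ⟨m, q, hq⟩ := (isSumSq_cubeAvg_pow_sub_cubeAvg_noise_pow hs hρ n
    fun x (_ : Unit) => (X x : MvPolynomial (Fin n → Bool) ℝ)).exists_fin_sum_sq
  refine ⟨m, q, Eq.trans ?_ hq⟩
  simp only [dotProduct, Fintype.sum_unique, noise_apply]
  simp only [cubeAvg, noise, C_mul', pow_mul, sq]
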